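/- arXiv:1009.5165 — 2 statements merged into one kernel-verified Lean document; each statement's English description precedes it below -/
import Mathlib

section
/- Let X be a real random variable with median M. Suppose there exist standard Gaussian random variables ξ, ξ' such that (M − X)₊ ≤ ξ₊ and (X − M)₊ ≤ ξ'₊ almost surely, where x₊ = max(x,0). Then E[X²] − (E[X])² + (M − E[X])² ≤ 1; in particular Var(X) ≤ 1 and E[X²] ≤ (E[X])² + 1. -/
open MeasureTheory ProbabilityTheory Matrix Finset Real

/-- The `k`-th largest singular value (0-indexed) of a real matrix. -/
noncomputable def sv {m n : ℕ} (M : Matrix (Fin m) (Fin n) ℝ) : ℕ → ℝ :=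
  fun k => Real.sqrt (((List.ofFn
    (show (Mᵀ * M).IsHermitian by simpa [Matrix.conjTranspose_eq_transpose_of_trivial] using Matrix.isHermitian_conjTranspose_mul_self M).eigenvalues).insertionSort (· ≥ ·)).getD k 0)

/-- The Ky-Fan `(2,r)` norm: square root of the sum of the `r` largest squared singular values. -/
noncomputable def kyFan {m n : ℕ} (r : ℕ) (M : Matrix (Fin m) (Fin n) ℝ) : ℝ :=
  Real.sqrt (∑ k ∈ Finset.range r, (sv M k) ^ 2)

/-- The Frobenius (Hilbert-Schmidt) norm. -/
noncomputable def frob {m n : ℕ} (M : Matrix (Fin m) (Fin n) ℝ) : ℝ :=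
  Real.sqrt (∑ i, ∑ j, (M i j) ^ 2)

/-! Since `(x - M)² = (x - M)₊² + (M - x)₊²`, the quantity `E[X²] - (EX)² + (M - EX)² = E[(X - M)²]`
is at most `E[ξ'₊²] + E[ξ₊²]`. By the symmetry of the standard Gaussian each of these is half of
`E[ξ²] = 1`. -/

open scoped NNReal

lemma sq_eq_max_zero_sq_add_max_neg_zero_sq (x : ℝ) : x ^ 2 = max x 0 ^ 2 + max (-x) 0 ^ 2 := by
  rcases le_total x 0 with h | h <;> simp [h]

lemma MeasureTheory.Integrable.max_zero_sq {μ : Measure ℝ} (h2 : Integrable (fun x ↦ x ^ 2) μ) :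
    Integrable (fun x ↦ max x 0 ^ 2) μ :=
  h2.mono' (by fun_prop) (ae_of_all _ fun x ↦ by
    rw [Real.norm_eq_abs, abs_of_nonneg (by positivity), sq_eq_max_zero_sq_add_max_neg_zero_sq x]
    exact le_add_of_nonneg_right (sq_nonneg _))

lemma integral_max_zero_sq_of_map_neg_eq {μ : Measure ℝ} (hμ : μ.map (fun x ↦ -x) = μ)
    (h2 : Integrable (fun x ↦ x ^ 2) μ) :
    ∫ x, max x 0 ^ 2 ∂μ = (∫ x, x ^ 2 ∂μ) / 2 := by
  have hpos := h2.max_zero_sq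
  have hneg_int : Integrable (fun x ↦ max (-x) 0 ^ 2) μ := by
    rw [← hμ] at hpos
    exact hpos.comp_measurable measurable_neg
  have hneg : ∫ x, max (-x) 0 ^ 2 ∂μ = ∫ x, max x 0 ^ 2 ∂μ := by
    conv_rhs => rw [← hμ]
    rw [integral_map (by fun_prop) (by fun_prop)]
  rw [funext sq_eq_max_zero_sq_add_max_neg_zero_sq, integral_add hpos hneg_int, hneg]
  ring

lemma integral_sq_gaussianReal (μ : ℝ) (v : ℝ≥0) : ∫ x, x ^ 2 ∂gaussianReal μ v = μ ^ 2 + v := by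
  have h := variance_eq_sub (memLp_id_gaussianReal (μ := μ) (v := v) 2)
  simp only [variance_id_gaussianReal, integral_id_gaussianReal, Pi.pow_apply, id] at h
  linarith

lemma integral_max_zero_sq_gaussianReal (v : ℝ≥0) :
    ∫ x, max x 0 ^ 2 ∂gaussianReal 0 v = v / 2 := by
  have hsymm : (gaussianReal 0 v).map (fun x ↦ -x) = gaussianReal 0 v := by
    simpa using gaussianReal_map_neg (μ := 0) (v := v)
  rw [integral_max_zero_sq_of_map_neg_eq hsymm (memLp_id_gaussianReal 2).integrable_sq,
    integral_sq_gaussianReal]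
  simp

section RandomVariables

variable {Ω : Type*} [MeasurableSpace Ω] {P : Measure Ω}

lemma ProbabilityTheory.HasLaw.of_map_eq {𝓧 : Type*} [MeasurableSpace 𝓧] {X : Ω → 𝓧}
    {μ : Measure 𝓧} [IsProbabilityMeasure μ] (h : P.map X = μ) : HasLaw X μ P :=
  ⟨.of_map_ne_zero (h ▸ IsProbabilityMeasure.ne_zero μ), h⟩

lemma integrable_max_zero_sq_of_map_eq_gaussianReal {ξ : Ω → ℝ} {v : ℝ≥0}
    (hξ : P.map ξ = gaussianReal 0 v) : Integrable (fun ω ↦ max (ξ ω) 0 ^ 2) P := by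
  have hint : Integrable (fun x ↦ max x 0 ^ 2) (P.map ξ) :=
    hξ ▸ (memLp_id_gaussianReal 2).integrable_sq.max_zero_sq
  exact hint.comp_aemeasurable (HasLaw.of_map_eq hξ).aemeasurable

lemma integral_max_zero_sq_of_map_eq_gaussianReal {ξ : Ω → ℝ} {v : ℝ≥0}
    (hξ : P.map ξ = gaussianReal 0 v) : ∫ ω, max (ξ ω) 0 ^ 2 ∂P = v / 2 := by
  rw [← integral_max_zero_sq_gaussianReal, ← (HasLaw.of_map_eq hξ).integral_comp (by fun_prop)]
  rfl

lemma integral_sub_sq_le_of_max_le {X Y Z : Ω → ℝ} {m : ℝ}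
    (hY : Integrable (fun ω ↦ max (Y ω) 0 ^ 2) P) (hZ : Integrable (fun ω ↦ max (Z ω) 0 ^ 2) P)
    (hlow : ∀ᵐ ω ∂P, max (m - X ω) 0 ≤ max (Y ω) 0)
    (hup : ∀ᵐ ω ∂P, max (X ω - m) 0 ≤ max (Z ω) 0) :
    ∫ ω, (X ω - m) ^ 2 ∂P ≤ ∫ ω, max (Y ω) 0 ^ 2 ∂P + ∫ ω, max (Z ω) 0 ^ 2 ∂P := by
  rw [← integral_add hY hZ]
  refine integral_mono_of_nonneg (ae_of_all _ fun ω ↦ sq_nonneg _) (hY.add hZ) ?_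
  filter_upwards [hlow, hup] with ω hl hu
  rw [sq_eq_max_zero_sq_add_max_neg_zero_sq (X ω - m), neg_sub, add_comm]
  gcongr

lemma integral_sub_const_sq [IsProbabilityMeasure P] {X : Ω → ℝ} (hX : Integrable X P)
    (hX2 : Integrable (fun ω ↦ X ω ^ 2) P) (m : ℝ) :
    ∫ ω, (X ω - m) ^ 2 ∂P = ∫ ω, X ω ^ 2 ∂P - 2 * m * ∫ ω, X ω ∂P + m ^ 2 := by
  have hlin : Integrable (fun ω ↦ 2 * X ω * m) P := (hX.const_mul 2).mul_const m
  simp_rw [sub_sq]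
  rw [integral_add (f := fun ω ↦ X ω ^ 2 - 2 * X ω * m) (hX2.sub hlin) (integrable_const _),
    integral_sub hX2 hlin, integral_mul_const, integral_const_mul]
  simp only [integral_const, probReal_univ, smul_eq_mul, one_mul]
  ring

end RandomVariables

theorem stmt5_general {Ω : Type*} [MeasureSpace Ω] [IsProbabilityMeasure (ℙ : Measure Ω)]
    (X ξ ξ' : Ω → ℝ) (M : ℝ)
    (hX : Integrable X) (hX2 : Integrable (fun ω => (X ω) ^ 2))
    (hξ : Measure.map ξ ℙ = gaussianReal 0 1) (hξ' : Measure.map ξ' ℙ = gaussianReal 0 1)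
    (h1 : ∀ᵐ ω ∂ℙ, max (M - X ω) 0 ≤ max (ξ ω) 0)
    (h2 : ∀ᵐ ω ∂ℙ, max (X ω - M) 0 ≤ max (ξ' ω) 0) :
    (∫ ω, (X ω) ^ 2) - (∫ ω, X ω) ^ 2 + (M - ∫ ω, X ω) ^ 2 ≤ 1 ∧
    variance X ℙ ≤ 1 ∧
    (∫ ω, (X ω) ^ 2) ≤ (∫ ω, X ω) ^ 2 + 1 := by
  have hdev : ∫ ω, (X ω - M) ^ 2 ≤ 1 := by
    have h := integral_sub_sq_le_of_max_le (integrable_max_zero_sq_of_map_eq_gaussianReal hξ)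
      (integrable_max_zero_sq_of_map_eq_gaussianReal hξ') h1 h2
    rwa [integral_max_zero_sq_of_map_eq_gaussianReal hξ,
      integral_max_zero_sq_of_map_eq_gaussianReal hξ', add_halves, NNReal.coe_one] at h
  have hmain : (∫ ω, (X ω) ^ 2) - (∫ ω, X ω) ^ 2 + (M - ∫ ω, X ω) ^ 2 ≤ 1 :=
    calc _ = ∫ ω, (X ω - M) ^ 2 := by rw [integral_sub_const_sq hX hX2 M]; ring
      _ ≤ 1 := hdev
  have hvar : variance X ℙ = (∫ ω, (X ω) ^ 2) - (∫ ω, X ω) ^ 2 := by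
    simpa using variance_eq_sub ((memLp_two_iff_integrable_sq hX.aestronglyMeasurable).2 hX2)
  have hgap := sq_nonneg (M - ∫ ω, X ω)
  exact ⟨hmain, by linarith, by linarith⟩

theorem stmt5 {Ω : Type*} [MeasureSpace Ω] [IsProbabilityMeasure (ℙ : Measure Ω)]
    (X ξ ξ' : Ω → ℝ) (M : ℝ)
    (hX : Integrable X) (hX2 : Integrable (fun ω => (X ω) ^ 2))
    (hmed1 : (1 : ENNReal) / 2 ≤ ℙ {ω | X ω ≤ M}) (hmed2 : (1 : ENNReal) / 2 ≤ ℙ {ω | M ≤ X ω})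
    (hξ : Measure.map ξ ℙ = gaussianReal 0 1) (hξ' : Measure.map ξ' ℙ = gaussianReal 0 1)
    (h1 : ∀ᵐ ω ∂ℙ, max (M - X ω) 0 ≤ max (ξ ω) 0)
    (h2 : ∀ᵐ ω ∂ℙ, max (X ω - M) 0 ≤ max (ξ' ω) 0) :
    (∫ ω, (X ω) ^ 2) - (∫ ω, X ω) ^ 2 + (M - ∫ ω, X ω) ^ 2 ≤ 1 ∧
    variance X ℙ ≤ 1 ∧
    (∫ ω, (X ω) ^ 2) ≤ (∫ ω, X ω) ^ 2 + 1 :=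
  stmt5_general X ξ ξ' M hX hX2 hξ hξ' h1 h2
end

section
/- Let ξ be a standard Gaussian random variable and let a, b ≥ 0 with b²·(K−1)/(K+1) ≥ 0 for some K > 1. Then E[(ξ₊² + 2aξ₊ − c)₊] ≤ (2 + 4a + 2a²)·e^{−c/(2(1+a)²)} for every c ≥ 0, so in particular the quantity E[(ξ₊² + 2bξ₊ − (K−1)/(K+1)·b²)₊] decays exponentially in b². -/
/-!
Let `x₀ ≥ 0` solve `x₀² + 2a x₀ = c`, so that the integrand is `(x² + 2ax - c) φ(x)` on
`(x₀, ∞)` and vanishes elsewhere. Integrating by parts, this integral equals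
`(x₀ + 2a) φ(x₀) - (c - 1) Q(x₀)` with `Q` the Gaussian tail; for `c ≥ 1` Mills' bound
`Q(x) ≥ x φ(x) / (1 + x²)` makes it at most `(1 + 2a) φ(x₀)`, and `c ≤ (1 + a)² (1 + x₀²)` bounds
`φ(x₀)` by `e^{1/2} e^{-c / (2(1+a)²)}`. For `c < 1` the crude bound
`E[ξ₊² + 2aξ₊] ≤ E[(1 + a) ξ² + a] = 1 + 2a` suffices.
-/

open MeasureTheory ProbabilityTheory Real Filter Set Topology

local notation "φ" => gaussianPDFReal 0 1

lemma gaussianPDFReal_zero_one : φ = fun x ↦ (√(2 * π))⁻¹ * exp (-x ^ 2 / 2) := by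
  ext x; simp [gaussianPDFReal]

lemma hasDerivAt_gaussianPDFReal_zero_one (x : ℝ) : HasDerivAt φ (-x * φ x) x := by
  have h : HasDerivAt (fun y : ℝ ↦ -y ^ 2 / 2) (-x) x :=
    ((hasDerivAt_pow 2 x).fun_neg.div_const 2).congr_deriv (by ring)
  rw [gaussianPDFReal_zero_one]
  exact (h.exp.const_mul _).congr_deriv (by ring)

lemma tendsto_gaussianPDFReal_zero_one_atTop : Tendsto φ atTop (𝓝 0) := by
  have h : Tendsto (fun x : ℝ ↦ -x ^ 2 / 2) atTop atBot := by
    simp_rw [neg_div]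
    exact tendsto_neg_atTop_atBot.comp ((tendsto_pow_atTop two_ne_zero).atTop_div_const two_pos)
  simpa [gaussianPDFReal_zero_one] using (tendsto_exp_atBot.comp h).const_mul (√(2 * π))⁻¹

lemma tendsto_mul_gaussianPDFReal_zero_one_atTop : Tendsto (fun x ↦ x * φ x) atTop (𝓝 0) := by
  have h := ((tendsto_rpow_abs_mul_exp_neg_mul_sq_cocompact (a := 1 / 2) (by norm_num) 1).mono_left
    atTop_le_cocompact).const_mul (√(2 * π))⁻¹
  rw [mul_zero] at h
  refine h.congr' ?_
  filter_upwards [eventually_ge_atTop 0] with x hx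
  rw [rpow_one, abs_of_nonneg hx, gaussianPDFReal_zero_one]
  ring_nf

lemma gaussianPDFReal_zero_one_le_exp (x : ℝ) : φ x ≤ exp (-x ^ 2 / 2) := by
  rw [gaussianPDFReal_zero_one]
  refine mul_le_of_le_one_left (exp_pos _).le (inv_le_one_of_one_le₀ ?_)
  exact one_le_sqrt.2 (by nlinarith [pi_gt_three])

lemma integral_sq_gaussianReal_zero_one : ∫ x, x ^ 2 ∂gaussianReal 0 1 = 1 := by
  rw [← variance_of_integral_eq_zero aemeasurable_id' integral_id_gaussianReal,
    variance_fun_id_gaussianReal, NNReal.coe_one]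

noncomputable def quadraticExcess (a c x : ℝ) : ℝ := max ((max x 0) ^ 2 + 2 * a * max x 0 - c) 0

section quadraticExcess

variable {a c x₀ : ℝ}

lemma continuous_quadraticExcess (a c : ℝ) : Continuous (quadraticExcess a c) := by
  unfold quadraticExcess; fun_prop

lemma quadraticExcess_nonneg (x : ℝ) : 0 ≤ quadraticExcess a c x := le_max_right _ _

lemma quadraticExcess_eq_zero_of_le (ha : 0 ≤ a) (hx₀ : 0 ≤ x₀) (hc : x₀ ^ 2 + 2 * a * x₀ = c)
    {x : ℝ} (hx : x ≤ x₀) : quadraticExcess a c x = 0 := by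
  have h₀ : 0 ≤ max x 0 := le_max_right x 0
  have h₁ : max x 0 ≤ x₀ := max_le hx hx₀
  exact max_eq_right (by nlinarith)

lemma quadraticExcess_of_le (ha : 0 ≤ a) (hx₀ : 0 ≤ x₀) (hc : x₀ ^ 2 + 2 * a * x₀ = c)
    {x : ℝ} (hx : x₀ ≤ x) : quadraticExcess a c x = x ^ 2 + 2 * a * x - c := by
  rw [quadraticExcess, max_eq_left (hx₀.trans hx), max_eq_left (by nlinarith)]

lemma quadraticExcess_le (ha : 0 ≤ a) (hc : 0 ≤ c) (x : ℝ) :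
    quadraticExcess a c x ≤ (1 + a) * x ^ 2 + a := by
  have h₀ : 0 ≤ max x 0 := le_max_right x 0
  have h₁ : max x 0 ^ 2 ≤ x ^ 2 := by
    rcases le_total x 0 with h | h
    · rw [max_eq_right h]; nlinarith [sq_nonneg x]
    · rw [max_eq_left h]
  refine max_le ?_ (by nlinarith [sq_nonneg x])
  nlinarith [mul_nonneg ha (sq_nonneg (max x 0 - 1))]

end quadraticExcess

/-- An antiderivative of `-(x² + 2ax - c + 2(c - 1) / (1 + x²)²) φ(x)`, combining both steps of the
integration by parts: the term `x (c - 1) φ / (1 + x²)` is Mills' lower bound for `(c - 1) Q`. -/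
noncomputable def gaussianTailPotential (a c x : ℝ) : ℝ :=
  (x * (1 - (c - 1) / (1 + x ^ 2)) + 2 * a) * φ x

section gaussianTailPotential

variable {a c x₀ : ℝ}

lemma hasDerivAt_gaussianTailPotential (a c x : ℝ) :
    HasDerivAt (gaussianTailPotential a c)
      (-((x ^ 2 + 2 * a * x - c + 2 * (c - 1) / (1 + x ^ 2) ^ 2) * φ x)) x := by
  have hx : 1 + x ^ 2 ≠ 0 := by positivity
  have hq : HasDerivAt (fun y ↦ 1 + y ^ 2) (2 * x) x :=
    ((hasDerivAt_pow 2 x).const_add 1).congr_deriv (by ring)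
  have hr := ((hasDerivAt_const x (c - 1)).fun_div hq hx).const_sub 1
  have hp := ((hasDerivAt_id' x).fun_mul hr).add_const (2 * a)
  refine (hp.fun_mul (hasDerivAt_gaussianPDFReal_zero_one x)).congr_deriv ?_
  field_simp
  ring

lemma tendsto_gaussianTailPotential_atTop (a c : ℝ) :
    Tendsto (gaussianTailPotential a c) atTop (𝓝 0) := by
  have hq : Tendsto (fun x : ℝ ↦ 1 - (c - 1) / (1 + x ^ 2)) atTop (𝓝 (1 - 0)) :=
    tendsto_const_nhds.sub <| tendsto_const_nhds.div_atTop <|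
      tendsto_atTop_add_const_left _ _ (tendsto_pow_atTop two_ne_zero)
  have h := (tendsto_mul_gaussianPDFReal_zero_one_atTop.mul hq).add
    (tendsto_gaussianPDFReal_zero_one_atTop.const_mul (2 * a))
  rw [zero_mul, mul_zero, add_zero] at h
  refine h.congr fun x ↦ ?_
  simp only [gaussianTailPotential]
  ring

lemma gaussianTailPotential_le (ha : 0 ≤ a) (hc : x₀ ^ 2 + 2 * a * x₀ = c) :
    gaussianTailPotential a c x₀ ≤ (1 + 2 * a) * φ x₀ := by
  refine mul_le_mul_of_nonneg_right ?_ (gaussianPDFReal_nonneg 0 1 x₀)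
  have hx : 0 < 1 + x₀ ^ 2 := by positivity
  have h : x₀ * (1 - (c - 1) / (1 + x₀ ^ 2)) = x₀ * (2 - 2 * a * x₀) / (1 + x₀ ^ 2) := by
    field_simp; rw [← hc]; ring
  have h₁ : x₀ * (2 - 2 * a * x₀) / (1 + x₀ ^ 2) ≤ 1 := by
    rw [div_le_one hx]
    nlinarith [sq_nonneg (x₀ - 1), mul_nonneg ha (sq_nonneg x₀)]
  linarith

end gaussianTailPotential

lemma integral_gaussianPDFReal_mul_quadraticExcess_le {a c x₀ : ℝ} (ha : 0 ≤ a) (hx₀ : 0 ≤ x₀)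
    (hc : x₀ ^ 2 + 2 * a * x₀ = c) (hc₁ : 1 ≤ c) :
    ∫ x, φ x * quadraticExcess a c x ≤ (1 + 2 * a) * φ x₀ := by
  set V := fun x ↦ (x ^ 2 + 2 * a * x - c + 2 * (c - 1) / (1 + x ^ 2) ^ 2) * φ x
  have hV : ∀ x ∈ Ioi x₀, φ x * quadraticExcess a c x ≤ V x := fun x hx ↦ by
    rw [quadraticExcess_of_le ha hx₀ hc (le_of_lt hx), mul_comm]
    have hcorr : 0 ≤ 2 * (c - 1) / (1 + x ^ 2) ^ 2 := div_nonneg (by linarith) (by positivity)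
    exact mul_le_mul_of_nonneg_right (le_add_of_nonneg_right hcorr) (gaussianPDFReal_nonneg 0 1 x)
  have hV₀ : ∀ x ∈ Ioi x₀, 0 ≤ V x := fun x hx ↦
    (mul_nonneg (gaussianPDFReal_nonneg 0 1 x) (quadraticExcess_nonneg x)).trans (hV x hx)
  have hderiv : ∀ x ∈ Ici x₀, HasDerivAt (fun y ↦ -gaussianTailPotential a c y) (V x) x :=
    fun x _ ↦ (hasDerivAt_gaussianTailPotential a c x).neg.congr_deriv (neg_neg _)
  have htend := (tendsto_gaussianTailPotential_atTop a c).neg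
  rw [neg_zero] at htend
  have hVint : IntegrableOn V (Ioi x₀) := integrableOn_Ioi_deriv_of_nonneg' hderiv hV₀ htend
  calc ∫ x, φ x * quadraticExcess a c x
      = ∫ x in Ioi x₀, φ x * quadraticExcess a c x := by
        refine (setIntegral_eq_integral_of_forall_compl_eq_zero fun x hx ↦ ?_).symm
        rw [quadraticExcess_eq_zero_of_le ha hx₀ hc (not_lt.1 hx), mul_zero]
    _ ≤ ∫ x in Ioi x₀, V x := by
        refine integral_mono_of_nonneg ?_ hVint ?_
        · exact ae_of_all _ fun x ↦
            mul_nonneg (gaussianPDFReal_nonneg 0 1 x) (quadraticExcess_nonneg x)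
        · exact (ae_restrict_iff' measurableSet_Ioi).2 (ae_of_all _ hV)
    _ = gaussianTailPotential a c x₀ := by
        rw [integral_Ioi_of_hasDerivAt_of_nonneg' hderiv hV₀ htend]; ring
    _ ≤ (1 + 2 * a) * φ x₀ := gaussianTailPotential_le ha hc

lemma gaussianPDFReal_zero_one_le_two_mul_exp {a : ℝ} (ha : 0 ≤ a) (x₀ : ℝ) :
    φ x₀ ≤ 2 * exp (-(x₀ ^ 2 + 2 * a * x₀) / (2 * (1 + a) ^ 2)) := by
  have hexp : exp (1 / 2) ≤ 2 := by
    have h : exp (1 / 2) ^ 2 = exp 1 := by rw [← exp_nat_mul]; norm_num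
    nlinarith [exp_one_lt_d9, exp_pos (1 / 2)]
  have hc : (x₀ ^ 2 + 2 * a * x₀) / (2 * (1 + a) ^ 2) ≤ (1 + x₀ ^ 2) / 2 := by
    rw [div_le_div_iff₀ (by positivity) two_pos]
    nlinarith [mul_nonneg ha (sq_nonneg (x₀ - 1)), mul_nonneg (mul_nonneg ha ha) (sq_nonneg x₀),
      mul_nonneg ha (sq_nonneg x₀)]
  calc φ x₀ ≤ exp (-x₀ ^ 2 / 2) := gaussianPDFReal_zero_one_le_exp x₀
    _ ≤ exp (1 / 2 + -(x₀ ^ 2 + 2 * a * x₀) / (2 * (1 + a) ^ 2)) := by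
        gcongr
        simp only [neg_div]
        linarith
    _ ≤ 2 * exp (-(x₀ ^ 2 + 2 * a * x₀) / (2 * (1 + a) ^ 2)) := by
        rw [exp_add]; gcongr

lemma integral_quadraticExcess_gaussianReal_le_of_lt_one {a c : ℝ} (ha : 0 ≤ a) (hc : 0 ≤ c)
    (hc₁ : c < 1) :
    ∫ x, quadraticExcess a c x ∂gaussianReal 0 1 ≤
      2 * (1 + 2 * a) * exp (-c / (2 * (1 + a) ^ 2)) := by
  have hsq : Integrable (fun x : ℝ ↦ x ^ 2) (gaussianReal 0 1) :=
    (memLp_id_gaussianReal 2).integrable_sq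
  have hexp : 1 / 2 ≤ exp (-c / (2 * (1 + a) ^ 2)) := by
    have h : c / (2 * (1 + a) ^ 2) ≤ 1 / 2 := by
      rw [div_le_div_iff₀ (by positivity) two_pos]
      nlinarith
    linarith [add_one_le_exp (-c / (2 * (1 + a) ^ 2)), neg_div (2 * (1 + a) ^ 2) c]
  calc ∫ x, quadraticExcess a c x ∂gaussianReal 0 1
      ≤ ∫ x, (1 + a) * x ^ 2 + a ∂gaussianReal 0 1 :=
        integral_mono_of_nonneg (ae_of_all _ quadraticExcess_nonneg)
          ((hsq.const_mul _).add (integrable_const _)) (ae_of_all _ (quadraticExcess_le ha hc))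
    _ = 1 + 2 * a := by
        rw [integral_add (hsq.const_mul _) (integrable_const _), integral_const_mul,
          integral_sq_gaussianReal_zero_one]
        simp only [integral_const, probReal_univ, smul_eq_mul]
        ring
    _ ≤ 2 * (1 + 2 * a) * exp (-c / (2 * (1 + a) ^ 2)) := by nlinarith

lemma exists_nonneg_sq_add_two_mul_eq {c : ℝ} (a : ℝ) (hc : 0 ≤ c) :
    ∃ x₀, 0 ≤ x₀ ∧ x₀ ^ 2 + 2 * a * x₀ = c :=
  ⟨√(c + a ^ 2) - a, sub_nonneg.2 (le_sqrt_of_sq_le (by linarith)),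
    by nlinarith [sq_sqrt (show 0 ≤ c + a ^ 2 by positivity)]⟩

lemma integral_quadraticExcess_gaussianReal_le_of_one_le {a c : ℝ} (ha : 0 ≤ a) (hc₁ : 1 ≤ c) :
    ∫ x, quadraticExcess a c x ∂gaussianReal 0 1 ≤
      2 * (1 + 2 * a) * exp (-c / (2 * (1 + a) ^ 2)) := by
  obtain ⟨x₀, hx₀, rfl⟩ := exists_nonneg_sq_add_two_mul_eq a (zero_le_one.trans hc₁)
  rw [integral_gaussianReal_eq_integral_smul one_ne_zero]
  calc ∫ x, φ x • quadraticExcess a _ x ≤ (1 + 2 * a) * φ x₀ :=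
        integral_gaussianPDFReal_mul_quadraticExcess_le ha hx₀ rfl hc₁
    _ ≤ (1 + 2 * a) * (2 * exp (-(x₀ ^ 2 + 2 * a * x₀) / (2 * (1 + a) ^ 2))) := by
        gcongr; exact gaussianPDFReal_zero_one_le_two_mul_exp ha x₀
    _ = _ := by ring

theorem stmt16_general {Ω : Type*} [MeasureSpace Ω]
    (ξ : Ω → ℝ) (hξ : Measure.map ξ ℙ = gaussianReal 0 1) (a : ℝ) (ha : 0 ≤ a) :
    ∀ c : ℝ, 0 ≤ c →
      ∫ ω, max ((max (ξ ω) 0) ^ 2 + 2 * a * max (ξ ω) 0 - c) 0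
        ≤ (2 + 4 * a + 2 * a ^ 2) * Real.exp (-c / (2 * (1 + a) ^ 2)) := by
  intro c hc
  have hξm : AEMeasurable ξ ℙ := .of_map_ne_zero (hξ ▸ IsProbabilityMeasure.ne_zero _)
  calc ∫ ω, max ((max (ξ ω) 0) ^ 2 + 2 * a * max (ξ ω) 0 - c) 0
      = ∫ x, quadraticExcess a c x ∂gaussianReal 0 1 := by
        rw [← hξ, integral_map hξm (continuous_quadraticExcess a c).aestronglyMeasurable]; rfl
    _ ≤ 2 * (1 + 2 * a) * exp (-c / (2 * (1 + a) ^ 2)) := by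
        rcases lt_or_ge c 1 with hc₁ | hc₁
        · exact integral_quadraticExcess_gaussianReal_le_of_lt_one ha hc hc₁
        · exact integral_quadraticExcess_gaussianReal_le_of_one_le ha hc₁
    _ ≤ (2 + 4 * a + 2 * a ^ 2) * exp (-c / (2 * (1 + a) ^ 2)) := by
        gcongr; nlinarith

theorem stmt16 {Ω : Type*} [MeasureSpace Ω] [IsProbabilityMeasure (ℙ : Measure Ω)]
    (ξ : Ω → ℝ) (hξ : Measure.map ξ ℙ = gaussianReal 0 1) (a : ℝ) (ha : 0 ≤ a) :
    ∀ c : ℝ, 0 ≤ c →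
      ∫ ω, max ((max (ξ ω) 0) ^ 2 + 2 * a * max (ξ ω) 0 - c) 0
        ≤ (2 + 4 * a + 2 * a ^ 2) * Real.exp (-c / (2 * (1 + a) ^ 2)) :=
  stmt16_general ξ hξ a ha
end
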